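/- Let C be a chord or finite gap (convex hull of a finite subset of the circle ℝ/ℤ) for the cubic map σ₃(θ) = 3θ, such that σ₃ restricted to the vertices of C is 2-to-1 onto its image and C has exactly one hole H of length ≥ 1/3. Define the co-critical set coc(C) as the convex hull of the set of points of the closure of H whose σ₃-images lie in σ₃(C). If ℓ = \overline{ab} is an edge of coc(C) with the open arc (a,b) disjoint from C, then σ₃ is injective on (a,b), i.e., the length of (a,b) is at most 1/3. -/

import Mathlib

open Metric Set

noncomputable section

instance : Fact ((0:ℝ) < 1) := ⟨one_pos⟩

/-- The point on the unit circle in `ℂ` corresponding to `x ∈ ℝ/ℤ`, i.e. `exp(2πix)`. -/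
noncomputable def pt (x : AddCircle (1:ℝ)) : ℂ := (AddCircle.toCircle x : ℂ)

/-- The chord of the closed unit disk joining `pt a` and `pt b`. -/
noncomputable def chord (a b : AddCircle (1:ℝ)) : Set ℂ := segment ℝ (pt a) (pt b)

/-- The map `θ ↦ dθ` on `ℝ/ℤ`. -/
def sig (d : ℕ) (x : AddCircle (1:ℝ)) : AddCircle (1:ℝ) := d • x

/-- Two chords are linked (cross) if they are distinct and intersect in the open unit disk. -/
def Linked (a b x y : AddCircle (1:ℝ)) : Prop :=
  chord a b ≠ chord x y ∧ (chord a b ∩ chord x y ∩ Metric.ball (0:ℂ) 1).Nonempty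

/-- The representative of `x ∈ ℝ/ℤ` in `[0,1)`. -/
noncomputable def rep (x : AddCircle (1:ℝ)) : ℝ := ((AddCircle.equivIco 1 0) x : ℝ)

/-- The open positively oriented arc from `a` to `b`. -/
def arc (a b : AddCircle (1:ℝ)) : Set (AddCircle (1:ℝ)) :=
  {x | 0 < rep (x - a) ∧ rep (x - a) < rep (b - a)}

/-- The closed positively oriented arc from `a` to `b`. -/
def closedArc (a b : AddCircle (1:ℝ)) : Set (AddCircle (1:ℝ)) := arc a b ∪ {a, b}

/-- `(a,b)` is a hole of `A`: `a, b ∈ A` and the nonempty open arc `(a,b)` misses `A`. -/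
def IsHole (A : Set (AddCircle (1:ℝ))) (a b : AddCircle (1:ℝ)) : Prop :=
  a ∈ A ∧ b ∈ A ∧ (arc a b).Nonempty ∧ arc a b ∩ A = ∅

/-- The convex hull in `ℂ` of the set of circle points corresponding to `A ⊆ ℝ/ℤ`. -/
noncomputable def hull (A : Set (AddCircle (1:ℝ))) : Set ℂ := convexHull ℝ (pt '' A)

/-- `p, q, r` are distinct and in strict positive circular order. -/
def cyc (p q r : AddCircle (1:ℝ)) : Prop := 0 < rep (q - p) ∧ rep (q - p) < rep (r - p)

/-- A tuple of circle points is in (weak) positive circular order. -/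
def CircOrd {k : ℕ} [NeZero k] (v : Fin k → AddCircle (1:ℝ)) : Prop :=
  Monotone fun i => rep (v i - v 0)

/-!
Let `s`, `t` be the positions of `a`, `b` on the arc `[a0, b0]`. If `s < t`, the hole `(a, b)`
lies inside `(a0, b0)`; were it longer than `1/3` it would contain `a + 1/3`, a point of
`[a0, b0]` with the same `σ₃`-image as `a`, hence a point of the co-critical set. If `t < s`, the
arc `(a, b)` contains the whole complement of `[a0, b0]`, so missing `V` forces
`V ⊆ {a0, b0}`. The degree-two condition then gives `σ₃ a0 = σ₃ b0`, so both arcs between `a0`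
and `b0` are holes of `V` of length `≥ 1/3`, against uniqueness of the long hole.
-/

lemma rep_mem_Ico (x : AddCircle (1:ℝ)) : rep x ∈ Ico (0:ℝ) 1 := by
  simpa [rep] using (AddCircle.equivIco 1 0 x).2

lemma rep_coe {r : ℝ} (hr : r ∈ Ico (0:ℝ) 1) : rep (r : AddCircle (1:ℝ)) = r := by
  have h := QuotientAddGroup.equivIcoMod_coe one_pos (0:ℝ) r
  have h2 : toIcoMod one_pos (0:ℝ) r = r := (toIcoMod_eq_self one_pos).mpr (by simpa using hr)
  simp [rep, AddCircle.equivIco, h, h2]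

lemma coe_rep (x : AddCircle (1:ℝ)) : ((rep x : ℝ) : AddCircle (1:ℝ)) = x := by
  simp [rep]

lemma rep_zero : rep (0 : AddCircle (1:ℝ)) = 0 := by
  simpa using rep_coe (r := 0) (by simp)

lemma rep_injective : Function.Injective rep := fun x y h => by
  rw [← coe_rep x, ← coe_rep y, h]

lemma rep_pos_iff {x : AddCircle (1:ℝ)} : 0 < rep x ↔ x ≠ 0 := by
  rw [(rep_mem_Ico x).1.lt_iff_ne', ne_eq, ← rep_zero, rep_injective.eq_iff]

lemma rep_sub_of_le {x y : AddCircle (1:ℝ)} (h : rep y ≤ rep x) :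
    rep (x - y) = rep x - rep y := by
  obtain ⟨hx0, hx1⟩ := rep_mem_Ico x
  obtain ⟨hy0, hy1⟩ := rep_mem_Ico y
  rw [← rep_coe (r := rep x - rep y) ⟨by linarith, by linarith⟩, QuotientAddGroup.mk_sub,
    coe_rep, coe_rep]

lemma rep_sub_of_lt {x y : AddCircle (1:ℝ)} (h : rep x < rep y) :
    rep (x - y) = rep x - rep y + 1 := by
  obtain ⟨hx0, hx1⟩ := rep_mem_Ico x
  obtain ⟨hy0, hy1⟩ := rep_mem_Ico y
  rw [← rep_coe (r := rep x - rep y + 1) ⟨by linarith, by linarith⟩, QuotientAddGroup.mk_add,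
    QuotientAddGroup.mk_sub, coe_rep, coe_rep, AddCircle.coe_period, add_zero]

lemma rep_neg {x : AddCircle (1:ℝ)} (hx : x ≠ 0) : rep (-x) = 1 - rep x := by
  rw [← zero_sub, rep_sub_of_lt (by rwa [rep_zero, rep_pos_iff]), rep_zero]; ring

lemma left_notMem_arc (a b : AddCircle (1:ℝ)) : a ∉ arc a b := fun h => by
  simpa [rep_zero] using h.1

lemma right_notMem_arc (a b : AddCircle (1:ℝ)) : b ∉ arc a b := fun h => h.2.false

lemma add_coe_mem_arc {a b : AddCircle (1:ℝ)} {r : ℝ} (hr : 0 < r) (hrb : r < rep (b - a)) :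
    a + (r : AddCircle (1:ℝ)) ∈ arc a b := by
  have hr1 : r < 1 := hrb.trans (rep_mem_Ico _).2
  simpa [arc, rep_coe ⟨hr.le, hr1⟩] using ⟨hr, hrb⟩

lemma arc_nonempty_iff {a b : AddCircle (1:ℝ)} : (arc a b).Nonempty ↔ a ≠ b := by
  refine ⟨fun ⟨x, hx⟩ hab => ?_, fun hab => ?_⟩
  · subst hab
    exact (hx.1.trans hx.2).ne' (by rw [sub_self, rep_zero])
  · have hpos : 0 < rep (b - a) := rep_pos_iff.2 (sub_ne_zero.2 hab.symm)
    exact ⟨_, add_coe_mem_arc (half_pos hpos) (half_lt_self hpos)⟩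

lemma mem_closedArc_iff {a0 b0 v : AddCircle (1:ℝ)} :
    v ∈ closedArc a0 b0 ↔ rep (v - a0) ≤ rep (b0 - a0) := by
  refine ⟨?_, fun h => ?_⟩
  · rintro (h | rfl | rfl)
    · exact h.2.le
    · rw [sub_self, rep_zero]; exact (rep_mem_Ico _).1
    · exact le_rfl
  · by_cases hv0 : v = a0
    · exact Or.inr (Or.inl hv0)
    by_cases hvb : rep (v - a0) = rep (b0 - a0)
    · exact Or.inr (Or.inr (sub_left_injective (rep_injective hvb)))
    exact Or.inl ⟨rep_pos_iff.2 (sub_ne_zero.2 hv0), lt_of_le_of_ne h hvb⟩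

section SubArcs

variable {a0 b0 a b : AddCircle (1:ℝ)}

lemma arc_subset_arc (hb : b ∈ closedArc a0 b0)
    (hab : rep (a - a0) < rep (b - a0)) : arc a b ⊆ arc a0 b0 := by
  intro x ⟨hx0, hxb⟩
  rw [mem_closedArc_iff] at hb
  have hs := (rep_mem_Ico (a - a0)).1
  have hba : rep (b - a) = rep (b - a0) - rep (a - a0) := by
    rw [← sub_sub_sub_cancel_right b a a0, rep_sub_of_le hab.le]
  have hxa : rep (x - a) + rep (a - a0) < 1 := by linarith [(rep_mem_Ico (b - a0)).2]
  have hxa0 : rep (x - a0) = rep (x - a) + rep (a - a0) := by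
    rw [← rep_coe ⟨by linarith, hxa⟩, QuotientAddGroup.mk_add, coe_rep, coe_rep, sub_add_sub_cancel]
  constructor <;> linarith

lemma compl_closedArc_subset_arc (ha : a ∈ closedArc a0 b0)
    (hba : rep (b - a0) < rep (a - a0)) : (closedArc a0 b0)ᶜ ⊆ arc a b := by
  intro v hv
  rw [mem_compl_iff, mem_closedArc_iff, not_le] at hv
  rw [mem_closedArc_iff] at ha
  have hva : rep (v - a) = rep (v - a0) - rep (a - a0) := by
    rw [← sub_sub_sub_cancel_right v a a0, rep_sub_of_le (ha.trans hv.le)]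
  have hba' : rep (b - a) = rep (b - a0) - rep (a - a0) + 1 := by
    rw [← sub_sub_sub_cancel_right b a a0, rep_sub_of_lt hba]
  constructor <;> linarith [(rep_mem_Ico (v - a0)).2, (rep_mem_Ico (b - a0)).1]

end SubArcs

lemma sig_add_inv_natCast {d : ℕ} (hd : d ≠ 0) (x : AddCircle (1:ℝ)) :
    sig d (x + (((d : ℝ)⁻¹ : ℝ) : AddCircle (1:ℝ))) = sig d x := by
  have h : d • (((d : ℝ)⁻¹ : ℝ) : AddCircle (1:ℝ)) = 0 := by
    rw [← QuotientAddGroup.mk_nsmul, nsmul_eq_mul, mul_inv_cancel₀ (by exact_mod_cast hd),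
      AddCircle.coe_period]
  simp only [sig, smul_add, h, add_zero]

lemma rep_sub_le_of_sig_eq {d : ℕ} (hd : d ≠ 0) {x y : AddCircle (1:ℝ)}
    (h : sig d x = sig d y) : rep (x - y) ≤ (d - 1) / d := by
  have hdpos : (0 : ℝ) < d := by exact_mod_cast Nat.pos_of_ne_zero hd
  have h0 : ((d * rep (x - y) : ℝ) : AddCircle (1:ℝ)) = 0 := by
    rw [← nsmul_eq_mul, QuotientAddGroup.mk_nsmul, coe_rep, nsmul_sub, sub_eq_zero]
    exact h
  obtain ⟨n, hn⟩ := (AddCircle.coe_eq_zero_iff (1:ℝ)).mp h0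
  have hn' : (n : ℝ) = d * rep (x - y) := by simpa using hn
  have hnd : n < d := by
    exact_mod_cast show (n : ℝ) < d by nlinarith [(rep_mem_Ico (x - y)).2]
  have hnd' : (n : ℝ) ≤ d - 1 := by exact_mod_cast Int.le_sub_one_of_lt hnd
  rw [le_div_iff₀ hdpos]
  linarith

lemma eq_of_ncard_fiber_eq_two {α β : Type*} {f : α → β} {V : Set α} {p q : α}
    (hV : V ⊆ {p, q}) (hp : p ∈ V) (h : (V ∩ f ⁻¹' {f p}).ncard = 2) : f q = f p := by
  by_contra hq
  have hsub : V ∩ f ⁻¹' {f p} ⊆ {p} := fun z ⟨hzV, hz⟩ => by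
    rcases hV hzV with rfl | rfl
    · rfl
    · exact absurd hz hq
  have := ncard_le_ncard hsub (finite_singleton p)
  rw [ncard_singleton] at this
  omega

lemma not_subset_pair_of_isHole {V : Set (AddCircle (1:ℝ))}
    (hdeg2 : ∀ y ∈ sig 3 '' V, (V ∩ sig 3 ⁻¹' {y}).ncard = 2) {a0 b0 : AddCircle (1:ℝ)}
    (hhole : IsHole V a0 b0)
    (huniq : ∀ a b, IsHole V a b → 1/3 ≤ rep (b - a) → a = a0 ∧ b = b0) :
    ¬ V ⊆ {a0, b0} := by
  intro hsub
  obtain ⟨ha0, hb0, hne, -⟩ := hhole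
  have hab : a0 ≠ b0 := arc_nonempty_iff.1 hne
  have hsig : sig 3 b0 = sig 3 a0 := eq_of_ncard_fiber_eq_two hsub ha0 (hdeg2 _ ⟨a0, ha0, rfl⟩)
  have hlen : rep (b0 - a0) ≤ 2/3 := by
    have := rep_sub_le_of_sig_eq three_ne_zero hsig
    norm_num at this
    linarith
  have hrev : IsHole V b0 a0 := by
    refine ⟨hb0, ha0, arc_nonempty_iff.2 hab.symm, eq_empty_of_forall_notMem ?_⟩
    rintro v ⟨hv, hvV⟩
    rcases hsub hvV with rfl | rfl
    · exact right_notMem_arc _ _ hv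
    · exact left_notMem_arc _ _ hv
  have hrevlen : 1/3 ≤ rep (a0 - b0) := by
    rw [← neg_sub, rep_neg (sub_ne_zero.2 hab.symm)]
    linarith
  exact hab (huniq b0 a0 hrev hrevlen).1.symm

theorem stmt_4_general (V : Set (AddCircle (1:ℝ)))
    (hdeg2 : ∀ y ∈ sig 3 '' V, (V ∩ sig 3 ⁻¹' {y}).ncard = 2)
    (a0 b0 : AddCircle (1:ℝ))
    (hhole : IsHole V a0 b0)
    (huniq : ∀ a b, IsHole V a b → 1/3 ≤ rep (b - a) → a = a0 ∧ b = b0)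
    (a b : AddCircle (1:ℝ))
    (hedge : IsHole {x ∈ closedArc a0 b0 | sig 3 x ∈ sig 3 '' V} a b)
    (hdisj : arc a b ∩ V = ∅) :
    rep (b - a) ≤ 1/3 := by
  obtain ⟨⟨haArc, haV⟩, ⟨hbArc, -⟩, hne, hdisW⟩ := hedge
  by_contra! hlong
  have hab : rep (a - a0) ≠ rep (b - a0) := fun h =>
    arc_nonempty_iff.1 hne (sub_left_injective (rep_injective h))
  rcases hab.lt_or_gt with hab | hba
  · set c : AddCircle (1:ℝ) := a + ((((3 : ℕ) : ℝ)⁻¹ : ℝ) : AddCircle (1:ℝ))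
    have hc : c ∈ arc a b := add_coe_mem_arc (by norm_num) (by norm_num; linarith)
    have hcW : c ∈ arc a b ∩ {x ∈ closedArc a0 b0 | sig 3 x ∈ sig 3 '' V} :=
      ⟨hc, Or.inl (arc_subset_arc hbArc hab hc), by rwa [sig_add_inv_natCast three_ne_zero]⟩
    rwa [hdisW] at hcW
  · refine not_subset_pair_of_isHole hdeg2 hhole huniq fun v hv => ?_
    have hvArc : v ∈ closedArc a0 b0 := by
      by_contra h
      exact hdisj.subset ⟨compl_closedArc_subset_arc haArc hba h, hv⟩
    exact hvArc.resolve_left fun h => hhole.2.2.2.subset ⟨h, hv⟩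

/-- if ℓ = ab is an edge of the co-critical set of a degree-two
critical set C (for σ₃) with the open arc (a,b) disjoint from C, then the
length of (a,b) is at most 1/3 (so σ₃ is injective on it). -/
theorem stmt_4 (V : Set (AddCircle (1:ℝ))) (hV : V.Finite) (hVne : V.Nonempty)
    (hdeg2 : ∀ y ∈ sig 3 '' V, (V ∩ sig 3 ⁻¹' {y}).ncard = 2)
    (a0 b0 : AddCircle (1:ℝ))
    (hhole : IsHole V a0 b0) (hlen : 1/3 ≤ rep (b0 - a0))
    (huniq : ∀ a b, IsHole V a b → 1/3 ≤ rep (b - a) → a = a0 ∧ b = b0)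
    (a b : AddCircle (1:ℝ))
    (hedge : IsHole {x ∈ closedArc a0 b0 | sig 3 x ∈ sig 3 '' V} a b)
    (hdisj : arc a b ∩ V = ∅) :
    rep (b - a) ≤ 1/3 :=
  stmt_4_general V hdeg2 a0 b0 hhole huniq a b hedge hdisj
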